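/- Let {X_n} be independent random variables in a sub-linear expectation space (Ω, H, E) with capacity V satisfying E[f] ≤ V(A) ≤ E[g] for 0 ≤ f ≤ I_A ≤ g, and suppose E is expressed as a supremum over a family P of probability measures with V^P(A) = sup_{P∈P} P(A) and v = 1 − V^P. If Σ_{n=1}^∞ v(X_n < 1) < ∞ and the family P is countable-dimensionally weakly compact, then V^P(⋃_{m=1}^∞ ⋂_{i=m}^∞ {X_i ≥ 1}) = 1; i.e., the complement of {X_i < 1 infinitely often} has full capacity. -/

import Mathlib

open Filter MeasureTheory Set
open scoped ENNReal

noncomputable section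

/-- A sub-linear expectation space: `H` is a linear space of real functions on `Ω`
(closed under composition with locally Lipschitz functions and containing constants),
and `E` is monotone, constant preserving, sub-additive and positively homogeneous on `H`. -/
structure SLE (Ω : Type*) where
  H : Set (Ω → ℝ)
  E : (Ω → ℝ) → ℝ
  const_mem : ∀ c : ℝ, (fun _ => c) ∈ H
  comp_mem : ∀ (n : ℕ) (Xs : Fin n → Ω → ℝ), (∀ i, Xs i ∈ H) →
      ∀ f : (Fin n → ℝ) → ℝ, LocallyLipschitz f →
      (fun ω => f (fun i => Xs i ω)) ∈ H
  mono : ∀ X ∈ H, ∀ Y ∈ H, (∀ ω, X ω ≤ Y ω) → E X ≤ E Y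
  const : ∀ c : ℝ, E (fun _ => c) = c
  subadd : ∀ X ∈ H, ∀ Y ∈ H, E (fun ω => X ω + Y ω) ≤ E X + E Y
  poshomog : ∀ X ∈ H, ∀ l : ℝ, 0 ≤ l → E (fun ω => l * X ω) = l * E X

namespace SLE

variable {Ω : Type*}

/-- The truncation `X^(c) = (-c) ∨ X ∧ c`. -/
def trunc (X : Ω → ℝ) (c : ℝ) : Ω → ℝ := fun ω => max (-c) (min (X ω) c)

/-- The upper capacity `V(A) = inf{E[ξ] : I_A ≤ ξ, ξ ∈ H}`. -/
def V (S : SLE Ω) (A : Set Ω) : ℝ :=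
  sInf {r | ∃ ξ ∈ S.H, (∀ ω, 0 ≤ ξ ω) ∧ (∀ ω ∈ A, (1 : ℝ) ≤ ξ ω) ∧ S.E ξ = r}

/-- `H₁ = {X ∈ H : lim_{c,d→∞} E[(|X| ∧ d - c)⁺] = 0}`. -/
def H1 (S : SLE Ω) : Set (Ω → ℝ) :=
  {X | X ∈ S.H ∧
    Tendsto (fun cd : ℝ × ℝ => S.E (fun ω => max (min |X ω| cd.2 - cd.1) 0))
      (atTop ×ˢ atTop) (nhds 0)}

/-- `Ê[X] = lim_{c→∞} E[(-c) ∨ X ∧ c]` (the limit along `c → ∞`, when it exists). -/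
def EHat (S : SLE Ω) (X : Ω → ℝ) : ℝ :=
  limUnder atTop (fun c : ℝ => S.E (trunc X c))

/-- Countably sub-additive extension of the upper capacity. -/
def Vstar (S : SLE Ω) (A : Set Ω) : ℝ≥0∞ :=
  ⨅ (B : ℕ → Set Ω) (_ : A ⊆ ⋃ n, B n), ∑' n, ENNReal.ofReal (S.V (B n))

/-- Bounded Lipschitz test functions on `ℝ`. -/
def BLip (φ : ℝ → ℝ) : Prop :=
  (∃ K, LipschitzWith K φ) ∧ ∃ M, ∀ x, |φ x| ≤ M

/-- Peng's independence for a sequence of random variables: `X (n)` is independent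
of `(X 0, …, X (n-1))` for every `n`, tested on bounded Lipschitz functions. -/
def Indep (S : SLE Ω) (X : ℕ → Ω → ℝ) : Prop :=
  ∀ n : ℕ, ∀ φ : (Fin n → ℝ) → ℝ → ℝ,
    (∃ K, LipschitzWith K (fun p : (Fin n → ℝ) × ℝ => φ p.1 p.2)) →
    (∃ M, ∀ a b, |φ a b| ≤ M) →
    S.E (fun ω => φ (fun i => X i ω) (X n ω)) =
      S.E (fun ω => S.E (fun ω' => φ (fun i => X i ω) (X n ω')))

/-- Identical distribution of a sequence. -/
def IdentDist (S : SLE Ω) (X : ℕ → Ω → ℝ) : Prop :=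
  ∀ n, ∀ φ : ℝ → ℝ, BLip φ → S.E (fun ω => φ (X n ω)) = S.E (fun ω => φ (X 0 ω))

/-- Regularity of a sub-linear expectation: `E[Yₙ] ↓ 0` whenever bounded `Yₙ ↓ 0`. -/
def Regular (S : SLE Ω) : Prop :=
  ∀ Y : ℕ → Ω → ℝ, (∀ n, Y n ∈ S.H) → (∃ M, ∀ n ω, |Y n ω| ≤ M) →
    (∀ ω, Antitone fun n => Y n ω) → (∀ ω, Tendsto (fun n => Y n ω) atTop (nhds 0)) →
    Tendsto (fun n => S.E (Y n)) atTop (nhds 0)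

end SLE

/-- The capacity `V^P(A) = sup_{P ∈ Ps} P(A)` generated by a family of probability measures. -/
def VP {Ω : Type*} [MeasurableSpace Ω] (Ps : Set (Measure Ω)) (A : Set Ω) : ℝ :=
  sSup ((fun P : Measure Ω => (P A).toReal) '' Ps)

/-!
For `δ > 0` let `ramp δ` be the piecewise linear function that vanishes on `(-∞, 1 - δ]` and equals
`1` on `[1, ∞)`. Independence makes `E` multiplicative on products of the bounded Lipschitz
functions `ramp δ (Xᵢ)`, and `E[ramp δ (Xᵢ)] ≥ V^P(Xᵢ ≥ 1)`, so
`E[∏_{i ≤ k} ramp (1/(k+1)) (Xᵢ)] ≥ 1 - ∑ᵢ v(Xᵢ < 1)`. Each of these expectations is almost attained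
by some `P_k ∈ P`; countable-dimensional weak compactness yields a single `P ∈ P` under which every
one of these products keeps the bound in the limit, and dominated convergence turns the products
into the indicator of `⋂ᵢ {Xᵢ ≥ 1}`. Applying this to the shifted sequences `X_{i+m}`, whose tail
sums tend to `0`, gives the theorem.
-/

open scoped NNReal Topology

theorem abs_le_one_of_mem_Icc {x : ℝ} (hx : x ∈ Icc (0 : ℝ) 1) : |x| ≤ 1 :=
  abs_le.2 ⟨by linarith [hx.1], hx.2⟩

theorem abs_prod_le_one {ι : Type*} {s : Finset ι} {u : ι → ℝ} (hu : ∀ i ∈ s, |u i| ≤ 1) :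
    |∏ i ∈ s, u i| ≤ 1 := by
  rw [Finset.abs_prod]
  exact Finset.prod_le_one (fun _ _ => abs_nonneg _) hu

section LipschitzProducts

variable {α ι : Type*} [PseudoMetricSpace α]

theorem LipschitzWith.mul_of_abs_le_one {K L : ℝ≥0} {F G : α → ℝ} (hF : LipschitzWith K F)
    (hG : LipschitzWith L G) (hF1 : ∀ a, |F a| ≤ 1) (hG1 : ∀ a, |G a| ≤ 1) :
    LipschitzWith (K + L) fun a => F a * G a := by
  refine LipschitzWith.of_dist_le_mul fun a b => ?_
  have hFd := hF.dist_le_mul a b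
  have hGd := hG.dist_le_mul a b
  rw [Real.dist_eq] at hFd hGd ⊢
  calc |F a * G a - F b * G b| = |(F a - F b) * G a + F b * (G a - G b)| := by ring_nf
    _ ≤ |F a - F b| * |G a| + |F b| * |G a - G b| := by
        rw [← abs_mul, ← abs_mul]; exact abs_add_le _ _
    _ ≤ |F a - F b| + |G a - G b| :=
        add_le_add (mul_le_of_le_one_right (abs_nonneg _) (hG1 a))
          (mul_le_of_le_one_left (abs_nonneg _) (hF1 b))
    _ ≤ (K + L : ℝ≥0) * dist a b := by push_cast; linarith

theorem LipschitzWith.prod_of_abs_le_one (s : Finset ι) {K : ι → ℝ≥0} {F : ι → α → ℝ}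
    (hF : ∀ i, LipschitzWith (K i) (F i)) (hF1 : ∀ i a, |F i a| ≤ 1) :
    LipschitzWith (∑ i ∈ s, K i) fun a => ∏ i ∈ s, F i a := by
  classical
  induction s using Finset.induction_on with
  | empty => simp
  | insert j s hj ih =>
    simp only [Finset.prod_insert hj, Finset.sum_insert hj]
    exact (hF j).mul_of_abs_le_one ih (hF1 j) fun a => abs_prod_le_one fun i _ => hF1 i a

end LipschitzProducts

theorem one_sub_sum_le_prod_of_mem_Icc {ι : Type*} (s : Finset ι) {u : ι → ℝ}
    (hu : ∀ i ∈ s, u i ∈ Icc (0 : ℝ) 1) : 1 - ∑ i ∈ s, (1 - u i) ≤ ∏ i ∈ s, u i := by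
  classical
  induction s using Finset.induction_on with
  | empty => simp
  | insert j s hj ih =>
    rw [Finset.prod_insert hj, Finset.sum_insert hj]
    have huj := hu j (Finset.mem_insert_self j s)
    have hs := fun i hi => hu i (Finset.mem_insert_of_mem hi)
    have hsum_nonneg : 0 ≤ ∑ i ∈ s, (1 - u i) :=
      Finset.sum_nonneg fun i hi => sub_nonneg.2 (hs i hi).2
    nlinarith [mul_le_mul_of_nonneg_left (ih hs) huj.1,
      mul_le_mul_of_nonneg_right huj.2 hsum_nonneg]

section Ramp

def ramp (δ x : ℝ) : ℝ := max 0 (min 1 ((x - 1) / δ + 1))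

theorem ramp_mem_Icc (δ x : ℝ) : ramp δ x ∈ Icc (0 : ℝ) 1 :=
  ⟨le_max_left _ _, max_le zero_le_one (min_le_left _ _)⟩

theorem ramp_of_one_le {δ x : ℝ} (hδ : 0 ≤ δ) (hx : 1 ≤ x) : ramp δ x = 1 := by
  have : 1 ≤ (x - 1) / δ + 1 := by linarith [div_nonneg (sub_nonneg.2 hx) hδ]
  simp [ramp, min_eq_left this]

theorem ramp_of_le_one_sub {δ x : ℝ} (hδ : 0 < δ) (hx : x ≤ 1 - δ) : ramp δ x = 0 := by
  have : (x - 1) / δ ≤ -1 := (div_le_iff₀ hδ).2 (by linarith)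
  exact max_eq_left (min_le_of_right_le (by linarith))

theorem ramp_le_ramp {δ δ' : ℝ} (hδ : 0 < δ) (hδδ' : δ ≤ δ') (x : ℝ) : ramp δ x ≤ ramp δ' x := by
  rcases le_or_gt 1 x with hx | hx
  · rw [ramp_of_one_le (hδ.le.trans hδδ') hx]
    exact (ramp_mem_Icc δ x).2
  · have : (x - 1) / δ ≤ (x - 1) / δ' := by
      rw [div_le_div_iff₀ hδ (hδ.trans_le hδδ')]
      exact mul_le_mul_of_nonpos_left hδδ' (by linarith)
    exact max_le_max le_rfl (min_le_min le_rfl (by linarith))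

theorem lipschitzWith_ramp {δ : ℝ} (hδ : 0 ≤ δ) : LipschitzWith (Real.toNNReal δ⁻¹) (ramp δ) := by
  have affine : LipschitzWith (Real.toNNReal δ⁻¹) fun x : ℝ => (x - 1) / δ + 1 := by
    refine LipschitzWith.of_dist_le_mul fun x y => ?_
    rw [Real.dist_eq, Real.dist_eq, Real.coe_toNNReal _ (inv_nonneg.2 hδ)]
    refine le_of_eq ?_
    calc |(x - 1) / δ + 1 - ((y - 1) / δ + 1)| = |δ⁻¹ * (x - y)| := by ring_nf
      _ = δ⁻¹ * |x - y| := by rw [abs_mul, abs_of_nonneg (inv_nonneg.2 hδ)]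
  exact (affine.const_min 1).const_max 0

theorem ramp_clamp {δ : ℝ} (hδ : 0 < δ) (hδ1 : δ ≤ 1) (x : ℝ) :
    ramp δ (max 0 (min 1 x)) = ramp δ x := by
  rcases le_or_gt 1 x with h1 | h1
  · rw [min_eq_left h1, max_eq_right zero_le_one, ramp_of_one_le hδ.le le_rfl,
      ramp_of_one_le hδ.le h1]
  rcases le_or_gt x 0 with h0 | h0
  · rw [min_eq_right (h0.trans zero_le_one), max_eq_left h0,
      ramp_of_le_one_sub hδ (by linarith), ramp_of_le_one_sub hδ (by linarith)]
  · rw [min_eq_right h1.le, max_eq_right h0.le]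

def rampProd (x : ℕ → ℝ) (k : ℕ) : ℝ := ∏ i ∈ Finset.range (k + 1), ramp (k + 1 : ℝ)⁻¹ (x i)

theorem rampProd_mem_Icc (x : ℕ → ℝ) (k : ℕ) : rampProd x k ∈ Icc (0 : ℝ) 1 :=
  ⟨Finset.prod_nonneg fun _ _ => (ramp_mem_Icc _ _).1,
    Finset.prod_le_one (fun _ _ => (ramp_mem_Icc _ _).1) fun _ _ => (ramp_mem_Icc _ _).2⟩

theorem rampProd_clamp (x : ℕ → ℝ) (k : ℕ) :
    rampProd (fun i => max 0 (min 1 (x i))) k = rampProd x k :=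
  Finset.prod_congr rfl fun i _ =>
    ramp_clamp (by positivity) (inv_le_one_of_one_le₀ (by linarith [k.cast_nonneg (α := ℝ)])) _

theorem antitone_rampProd (x : ℕ → ℝ) : Antitone (rampProd x) := by
  refine antitone_nat_of_succ_le fun k => ?_
  have hδ : (0 : ℝ) < ((k + 1 : ℕ) + 1 : ℝ)⁻¹ := by positivity
  have hδδ' : ((k + 1 : ℕ) + 1 : ℝ)⁻¹ ≤ (k + 1 : ℝ)⁻¹ := by
    gcongr; linarith
  calc rampProd x (k + 1)
      ≤ ∏ i ∈ Finset.range (k + 1), ramp ((k + 1 : ℕ) + 1 : ℝ)⁻¹ (x i) := by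
        rw [rampProd, Finset.prod_range_succ]
        exact mul_le_of_le_one_right (Finset.prod_nonneg fun _ _ => (ramp_mem_Icc _ _).1)
          (ramp_mem_Icc _ _).2
    _ ≤ rampProd x k :=
        Finset.prod_le_prod (fun _ _ => (ramp_mem_Icc _ _).1) fun i _ => ramp_le_ramp hδ hδδ' _

theorem tendsto_rampProd (x : ℕ → ℝ) :
    Tendsto (rampProd x) atTop (𝓝 ({y : ℕ → ℝ | ∀ i, 1 ≤ y i}.indicator 1 x)) := by
  by_cases h : ∀ i, 1 ≤ x i
  · rw [indicator_of_mem (show x ∈ {y : ℕ → ℝ | ∀ i, 1 ≤ y i} from h), Pi.one_apply]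
    refine tendsto_const_nhds.congr fun k => ?_
    exact (Finset.prod_eq_one fun i _ => ramp_of_one_le (by positivity) (h i)).symm
  · rw [indicator_of_notMem (show x ∉ {y : ℕ → ℝ | ∀ i, 1 ≤ y i} from h)]
    obtain ⟨i, hi⟩ := not_forall.1 h
    obtain ⟨N, hN⟩ := exists_nat_one_div_lt (sub_pos.2 (not_le.1 hi))
    refine tendsto_const_nhds.congr' ?_
    filter_upwards [eventually_ge_atTop (max N i)] with k hk
    have hik : i ∈ Finset.range (k + 1) := Finset.mem_range.2 (by omega)
    refine (Finset.prod_eq_zero hik (ramp_of_le_one_sub (by positivity) ?_)).symm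
    have : (k + 1 : ℝ)⁻¹ ≤ 1 / (N + 1) := by
      rw [one_div]; gcongr; exact_mod_cast le_of_max_le_left hk
    linarith

variable {Ω : Type*} [MeasurableSpace Ω] {X : ℕ → Ω → ℝ}

theorem measurable_rampProd (hX : ∀ i, Measurable (X i)) (k : ℕ) :
    Measurable fun ω => rampProd (fun i => X i ω) k :=
  Finset.measurable_prod _ fun i _ =>
    (lipschitzWith_ramp (by positivity)).continuous.measurable.comp (hX i)

theorem integrable_rampProd {μ : Measure Ω} [IsFiniteMeasure μ] (hX : ∀ i, Measurable (X i))
    (k : ℕ) : Integrable (fun ω => rampProd (fun i => X i ω) k) μ :=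
  Integrable.of_bound (measurable_rampProd hX k).aestronglyMeasurable 1
    (ae_of_all _ fun _ => (Real.norm_eq_abs _).trans_le
      (abs_le_one_of_mem_Icc (rampProd_mem_Icc _ k)))

theorem tendsto_integral_rampProd {μ : Measure Ω} [IsFiniteMeasure μ]
    (hX : ∀ i, Measurable (X i)) :
    Tendsto (fun k => ∫ ω, rampProd (fun i => X i ω) k ∂μ) atTop
      (𝓝 (μ (⋂ i, {ω | 1 ≤ X i ω})).toReal) := by
  have hT : MeasurableSet (⋂ i, {ω | 1 ≤ X i ω}) :=
    MeasurableSet.iInter fun i => measurableSet_le measurable_const (hX i)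
  rw [← measureReal_def, ← integral_indicator_one hT]
  refine tendsto_integral_of_dominated_convergence (fun _ => 1)
    (fun k => (measurable_rampProd hX k).aestronglyMeasurable) (integrable_const 1)
    (fun k => ae_of_all _ fun _ => (Real.norm_eq_abs _).trans_le
      (abs_le_one_of_mem_Icc (rampProd_mem_Icc _ k)))
    (ae_of_all _ fun ω => ?_)
  convert tendsto_rampProd (fun i => X i ω) using 2
  by_cases h : ∀ i, 1 ≤ X i ω <;> simp [h]

end Ramp

namespace SLE

variable {Ω : Type*} (S : SLE Ω)

theorem comp_mem_of_lipschitzWith {X : Ω → ℝ} (hX : X ∈ S.H) {g : ℝ → ℝ} {K : ℝ≥0}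
    (hg : LipschitzWith K g) : (fun ω => g (X ω)) ∈ S.H := by
  simpa using S.comp_mem 1 (fun _ => X) (fun _ => hX) (fun v => g (v 0))
    (hg.comp (LipschitzWith.eval 0)).locallyLipschitz

theorem prod_comp_mem {X : ℕ → Ω → ℝ} (hX : ∀ i, X i ∈ S.H) {g : ℕ → ℝ → ℝ} {K : ℕ → ℝ≥0}
    (hg : ∀ i, LipschitzWith (K i) (g i)) (hg1 : ∀ i x, |g i x| ≤ 1) (n : ℕ) :
    (fun ω => ∏ i ∈ Finset.range n, g i (X i ω)) ∈ S.H := by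
  have hlip := LipschitzWith.prod_of_abs_le_one Finset.univ
    (fun i : Fin n => (hg i).comp (LipschitzWith.eval i)) fun i y => hg1 i (y i)
  convert S.comp_mem n (fun i => X i) (fun i => hX i) _ hlip.locallyLipschitz using 1
  funext ω
  exact (Fin.prod_univ_eq_prod_range (fun i => g i (X i ω)) n).symm

theorem E_nonneg {Z : Ω → ℝ} (hZ : Z ∈ S.H) (h0 : ∀ ω, 0 ≤ Z ω) : 0 ≤ S.E Z :=
  (S.const 0).symm.trans_le (S.mono _ (S.const_mem 0) _ hZ h0)

theorem E_le_one {Z : Ω → ℝ} (hZ : Z ∈ S.H) (h1 : ∀ ω, Z ω ≤ 1) : S.E Z ≤ 1 :=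
  (S.mono _ hZ _ (S.const_mem 1) h1).trans_eq (S.const 1)

variable {S}

theorem Indep.E_prod {X : ℕ → Ω → ℝ} (hX : S.Indep X) (hH : ∀ i, X i ∈ S.H)
    {g : ℕ → ℝ → ℝ} {K : ℕ → ℝ≥0} (hg : ∀ i, LipschitzWith (K i) (g i))
    (hg01 : ∀ i x, g i x ∈ Icc (0 : ℝ) 1) (n : ℕ) :
    S.E (fun ω => ∏ i ∈ Finset.range n, g i (X i ω)) =
      ∏ i ∈ Finset.range n, S.E (fun ω => g i (X i ω)) := by
  have hg1 : ∀ i x, |g i x| ≤ 1 := fun i x => abs_le_one_of_mem_Icc (hg01 i x)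
  induction n with
  | zero => simpa using S.const 1
  | succ n ih =>
    have hgn : (fun ω => g n (X n ω)) ∈ S.H := S.comp_mem_of_lipschitzWith (hH n) (hg n)
    have hfirst := LipschitzWith.prod_of_abs_le_one Finset.univ
      (F := fun (i : Fin n) (p : (Fin n → ℝ) × ℝ) => g i (p.1 i))
      (fun i => (hg i).comp ((LipschitzWith.eval i).comp LipschitzWith.prod_fst))
      fun i p => hg1 i (p.1 i)
    have hlast : LipschitzWith (K n * 1) fun p : (Fin n → ℝ) × ℝ => g n p.2 :=
      (hg n).comp LipschitzWith.prod_snd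
    have hφ_lip := hfirst.mul_of_abs_le_one hlast
      (fun p => abs_prod_le_one fun i _ => hg1 i (p.1 i)) fun p => hg1 n p.2
    have hφ_bdd : ∀ (a : Fin n → ℝ) (b : ℝ), |(∏ i : Fin n, g i (a i)) * g n b| ≤ 1 :=
      fun a b => by
        rw [abs_mul]
        exact mul_le_one₀ (abs_prod_le_one fun i _ => hg1 i _) (abs_nonneg _) (hg1 n b)
    have hφ := hX n (fun a b => (∏ i : Fin n, g i (a i)) * g n b) ⟨_, hφ_lip⟩ ⟨1, hφ_bdd⟩
    have hrange : ∀ ω, ∏ i : Fin n, g i (X i ω) = ∏ i ∈ Finset.range n, g i (X i ω) :=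
      fun ω => Fin.prod_univ_eq_prod_range (fun i => g i (X i ω)) n
    simp only [hrange] at hφ
    calc S.E (fun ω => ∏ i ∈ Finset.range (n + 1), g i (X i ω))
        = S.E (fun ω => S.E (fun ω' => (∏ i ∈ Finset.range n, g i (X i ω)) * g n (X n ω'))) := by
          simpa only [Finset.prod_range_succ] using hφ
      _ = S.E (fun ω => S.E (fun ω' => g n (X n ω')) * ∏ i ∈ Finset.range n, g i (X i ω)) := by
          congr 1; funext ω
          rw [S.poshomog _ hgn _ (Finset.prod_nonneg fun i _ => (hg01 i _).1), mul_comm]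
      _ = S.E (fun ω => g n (X n ω)) * S.E (fun ω => ∏ i ∈ Finset.range n, g i (X i ω)) :=
          S.poshomog _ (S.prod_comp_mem hH hg hg1 n) _ (S.E_nonneg hgn fun ω => (hg01 n _).1)
      _ = ∏ i ∈ Finset.range (n + 1), S.E (fun ω => g i (X i ω)) := by
          rw [ih, Finset.prod_range_succ, mul_comm]

theorem Indep.shift {X : ℕ → Ω → ℝ} (hX : S.Indep X) (m : ℕ) : S.Indep fun i => X (i + m) := by
  rintro n φ ⟨K, hK⟩ ⟨M, hM⟩
  have hrestrict : LipschitzWith 1 fun x : Fin (n + m) → ℝ => fun i : Fin n => x (i.addNat m) :=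
    LipschitzWith.of_dist_le_mul fun x y => by
      simpa using (dist_pi_le_iff dist_nonneg).2 fun i : Fin n => dist_le_pi_dist x y (i.addNat m)
  exact hX (n + m) (fun (x : Fin (n + m) → ℝ) y => φ (fun i : Fin n => x (i.addNat m)) y)
    ⟨_, hK.comp ((hrestrict.comp LipschitzWith.prod_fst).prodMk LipschitzWith.prod_snd)⟩
    ⟨M, fun _ _ => hM _ _⟩

end SLE

section Capacity

variable {Ω : Type*} [MeasurableSpace Ω] {Ps : Set (Measure Ω)}

def SLE.IsRepresentedBy (S : SLE Ω) (Ps : Set (Measure Ω)) : Prop :=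
  ∀ X ∈ S.H, (∃ M, ∀ ω, |X ω| ≤ M) → S.E X = sSup ((fun P : Measure Ω => ∫ ω, X ω ∂P) '' Ps)

def SLE.CountableDimWeaklyCompact (S : SLE Ω) (Ps : Set (Measure Ω)) : Prop :=
  ∀ Y : ℕ → Ω → ℝ, (∀ i, Y i ∈ S.H ∧ ∃ M, ∀ ω, |Y i ω| ≤ M) →
    ∀ Q : ℕ → Measure Ω, (∀ k, Q k ∈ Ps) →
    ∃ φ : ℕ → ℕ, StrictMono φ ∧ ∃ P ∈ Ps,
      ∀ (d : ℕ) (f : (Fin d → ℝ) → ℝ), (∃ K, LipschitzWith K f) → (∃ M, ∀ x, |f x| ≤ M) →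
        Tendsto (fun k => ∫ ω, f (fun i : Fin d => Y i ω) ∂(Q (φ k))) atTop
          (𝓝 (∫ ω, f (fun i : Fin d => Y i ω) ∂P))

theorem measure_toReal_le_VP (hprob : ∀ P ∈ Ps, IsProbabilityMeasure P) {P : Measure Ω}
    (hP : P ∈ Ps) (A : Set Ω) : (P A).toReal ≤ VP Ps A := by
  refine le_csSup ⟨1, ?_⟩ ⟨P, hP, rfl⟩
  rintro _ ⟨Q, hQ, rfl⟩
  have := hprob Q hQ
  exact measureReal_le_one

theorem VP_le_one (hprob : ∀ P ∈ Ps, IsProbabilityMeasure P) (A : Set Ω) : VP Ps A ≤ 1 := by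
  refine Real.sSup_le ?_ zero_le_one
  rintro _ ⟨P, hP, rfl⟩
  have := hprob P hP
  exact measureReal_le_one

theorem VP_mono (hprob : ∀ P ∈ Ps, IsProbabilityMeasure P) {A B : Set Ω} (hAB : A ⊆ B) :
    VP Ps A ≤ VP Ps B := by
  refine Real.sSup_le ?_ (Real.sSup_nonneg ?_)
  · rintro _ ⟨P, hP, rfl⟩
    have := hprob P hP
    exact (measureReal_mono hAB).trans (measure_toReal_le_VP hprob hP B)
  · rintro _ ⟨P, -, rfl⟩
    exact ENNReal.toReal_nonneg

namespace SLE.IsRepresentedBy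

variable {S : SLE Ω}

theorem nonempty (hrep : S.IsRepresentedBy Ps) : Ps.Nonempty := by
  by_contra h
  have h1 := hrep _ (S.const_mem 1) ⟨1, fun _ => by simp⟩
  rw [S.const, not_nonempty_iff_eq_empty.1 h, image_empty, Real.sSup_empty] at h1
  exact one_ne_zero h1

theorem exists_lt_integral (hrep : S.IsRepresentedBy Ps) {Z : Ω → ℝ} (hZ : Z ∈ S.H)
    (hZb : ∃ M, ∀ ω, |Z ω| ≤ M) {r : ℝ} (hr : r < S.E Z) : ∃ P ∈ Ps, r < ∫ ω, Z ω ∂P := by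
  rw [hrep Z hZ hZb] at hr
  obtain ⟨_, ⟨P, hP, rfl⟩, hlt⟩ := exists_lt_of_lt_csSup (hrep.nonempty.image _) hr
  exact ⟨P, hP, hlt⟩

theorem VP_le_E (hrep : S.IsRepresentedBy Ps) (hprob : ∀ P ∈ Ps, IsProbabilityMeasure P)
    {A : Set Ω} (hA : MeasurableSet A) {Z : Ω → ℝ} (hZ : Z ∈ S.H) (hZm : Measurable Z)
    (hZb : ∃ M, ∀ ω, |Z ω| ≤ M) (hAZ : ∀ ω, A.indicator 1 ω ≤ Z ω) : VP Ps A ≤ S.E Z := by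
  obtain ⟨M, hM⟩ := hZb
  have hZ0 : ∀ ω, 0 ≤ Z ω :=
    fun ω => (indicator_nonneg (fun _ _ => zero_le_one) ω).trans (hAZ ω)
  have hint : ∀ P ∈ Ps, Integrable Z P := fun P hP =>
    have := hprob P hP
    Integrable.of_bound hZm.aestronglyMeasurable M
      (ae_of_all _ fun ω => (Real.norm_eq_abs _).trans_le (hM ω))
  have hbdd : BddAbove ((fun P : Measure Ω => ∫ ω, Z ω ∂P) '' Ps) := by
    refine ⟨M, ?_⟩
    rintro _ ⟨P, hP, rfl⟩
    have := hprob P hP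
    have := norm_integral_le_of_norm_le_const (μ := P)
      (ae_of_all _ fun ω => (Real.norm_eq_abs (Z ω)).trans_le (hM ω))
    simpa using (le_abs_self _).trans this
  refine Real.sSup_le ?_ (S.E_nonneg hZ hZ0)
  rintro _ ⟨P, hP, rfl⟩
  have := hprob P hP
  rw [hrep Z hZ ⟨M, hM⟩]
  calc (P A).toReal = ∫ ω, A.indicator 1 ω ∂P := (integral_indicator_one hA).symm
    _ ≤ ∫ ω, Z ω ∂P := integral_mono ((integrable_const 1).indicator hA) (hint P hP) hAZ
    _ ≤ _ := le_csSup hbdd ⟨P, hP, rfl⟩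

end SLE.IsRepresentedBy

theorem SLE.CountableDimWeaklyCompact.exists_forall_le_integral {S : SLE Ω}
    (hcpt : S.CountableDimWeaklyCompact Ps) {Y : ℕ → Ω → ℝ}
    (hY : ∀ i, Y i ∈ S.H ∧ ∃ M, ∀ ω, |Y i ω| ≤ M) {Q : ℕ → Measure Ω} (hQ : ∀ k, Q k ∈ Ps)
    {d : ℕ → ℕ} {f : ∀ j, (Fin (d j) → ℝ) → ℝ} (hf : ∀ j, ∃ K, LipschitzWith K (f j))
    (hfb : ∀ j, ∃ M, ∀ y, |f j y| ≤ M) {r : ℝ}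
    (hr : ∀ j k, j ≤ k → r ≤ ∫ ω, f j (fun i => Y i ω) ∂Q k) :
    ∃ P ∈ Ps, ∀ j, r ≤ ∫ ω, f j (fun i => Y i ω) ∂P := by
  obtain ⟨φ, hφ, P, hP, hconv⟩ := hcpt Y hY Q hQ
  refine ⟨P, hP, fun j => ge_of_tendsto (hconv (d j) (f j) (hf j) (hfb j)) ?_⟩
  filter_upwards [eventually_ge_atTop j] with k hk using hr j (φ k) (hk.trans hφ.le_apply)

end Capacity

section BorelCantelli

variable {Ω : Type*} [MeasurableSpace Ω] {Ps : Set (Measure Ω)} {S : SLE Ω} {X : ℕ → Ω → ℝ}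

theorem one_sub_tsum_le_E_rampProd (hprob : ∀ P ∈ Ps, IsProbabilityMeasure P)
    (hrep : S.IsRepresentedBy Ps) (hH : ∀ i, X i ∈ S.H) (hmeas : ∀ i, Measurable (X i))
    (hindep : S.Indep X) (hsum : Summable fun n => 1 - VP Ps {ω | 1 ≤ X n ω}) (k : ℕ) :
    1 - ∑' n, (1 - VP Ps {ω | 1 ≤ X n ω}) ≤ S.E fun ω => rampProd (fun i => X i ω) k := by
  set δ : ℝ := (k + 1 : ℝ)⁻¹
  have hδ : 0 < δ := by positivity
  have hmem : ∀ i, (fun ω => ramp δ (X i ω)) ∈ S.H :=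
    fun i => S.comp_mem_of_lipschitzWith (hH i) (lipschitzWith_ramp hδ.le)
  have hVP_le : ∀ i, VP Ps {ω | 1 ≤ X i ω} ≤ S.E fun ω => ramp δ (X i ω) := fun i =>
    hrep.VP_le_E hprob (measurableSet_le measurable_const (hmeas i)) (hmem i)
      ((lipschitzWith_ramp hδ.le).continuous.measurable.comp (hmeas i))
      ⟨1, fun ω => abs_le_one_of_mem_Icc (ramp_mem_Icc δ _)⟩
      fun ω => indicator_apply_le' (fun h => (ramp_of_one_le hδ.le h).ge)
        fun _ => (ramp_mem_Icc δ _).1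
  have hE_mem : ∀ i, (S.E fun ω => ramp δ (X i ω)) ∈ Icc (0 : ℝ) 1 := fun i =>
    ⟨S.E_nonneg (hmem i) fun ω => (ramp_mem_Icc δ _).1,
      S.E_le_one (hmem i) fun ω => (ramp_mem_Icc δ _).2⟩
  calc 1 - ∑' n, (1 - VP Ps {ω | 1 ≤ X n ω})
      ≤ 1 - ∑ i ∈ Finset.range (k + 1), (1 - VP Ps {ω | 1 ≤ X i ω}) :=
        sub_le_sub_left (hsum.sum_le_tsum _ fun i _ => sub_nonneg.2 (VP_le_one hprob _)) 1
    _ ≤ 1 - ∑ i ∈ Finset.range (k + 1), (1 - S.E fun ω => ramp δ (X i ω)) := by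
        gcongr with i; exact hVP_le i
    _ ≤ ∏ i ∈ Finset.range (k + 1), S.E fun ω => ramp δ (X i ω) :=
        one_sub_sum_le_prod_of_mem_Icc _ fun i _ => hE_mem i
    _ = S.E fun ω => rampProd (fun i => X i ω) k :=
        (hindep.E_prod hH (fun _ => lipschitzWith_ramp hδ.le) (fun _ => ramp_mem_Icc δ) _).symm

theorem exists_forall_le_integral_rampProd (hprob : ∀ P ∈ Ps, IsProbabilityMeasure P)
    (hrep : S.IsRepresentedBy Ps) (hcpt : S.CountableDimWeaklyCompact Ps)
    (hH : ∀ i, X i ∈ S.H) (hmeas : ∀ i, Measurable (X i)) {r : ℝ}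
    (hr : ∀ k, r < S.E fun ω => rampProd (fun i => X i ω) k) :
    ∃ P ∈ Ps, ∀ j, r ≤ ∫ ω, rampProd (fun i => X i ω) j ∂P := by
  have hmem : ∀ k, (fun ω => rampProd (fun i => X i ω) k) ∈ S.H := fun k =>
    S.prod_comp_mem hH (fun _ => lipschitzWith_ramp (by positivity))
      (fun _ x => abs_le_one_of_mem_Icc (ramp_mem_Icc _ x)) (k + 1)
  choose Q hQ hQr using fun k => hrep.exists_lt_integral (hmem k)
    ⟨1, fun ω => abs_le_one_of_mem_Icc (rampProd_mem_Icc _ k)⟩ (hr k)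
  -- compactness is only available for bounded variables, and clamping does not change `rampProd`
  have hclamp : ∀ j ω, ∏ i : Fin (j + 1), ramp (j + 1 : ℝ)⁻¹ (max 0 (min 1 (X i ω))) =
      rampProd (fun i => X i ω) j := fun j ω =>
    (Fin.prod_univ_eq_prod_range (fun i => ramp (j + 1 : ℝ)⁻¹ (max 0 (min 1 (X i ω)))) _).trans
      (rampProd_clamp (fun i => X i ω) j)
  have hY : ∀ i, (fun ω => max 0 (min 1 (X i ω))) ∈ S.H ∧ ∃ M, ∀ ω, |max 0 (min 1 (X i ω))| ≤ M :=
    fun i => ⟨S.comp_mem_of_lipschitzWith (hH i) ((LipschitzWith.id.const_min 1).const_max 0),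
      1, fun ω => abs_le_one_of_mem_Icc ⟨le_max_left _ _, max_le zero_le_one (min_le_left _ _)⟩⟩
  have key := hcpt.exists_forall_le_integral hY hQ (d := fun j => j + 1)
    (f := fun j y => ∏ i : Fin (j + 1), ramp (j + 1 : ℝ)⁻¹ (y i))
    (fun j => ⟨_, LipschitzWith.prod_of_abs_le_one Finset.univ
      (fun i => (lipschitzWith_ramp (by positivity)).comp (LipschitzWith.eval i))
      fun i y => abs_le_one_of_mem_Icc (ramp_mem_Icc _ (y i))⟩)
    (fun j => ⟨1, fun y => abs_prod_le_one fun i _ => abs_le_one_of_mem_Icc (ramp_mem_Icc _ _)⟩)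
    (r := r) fun j k hjk => ?_
  · simpa only [hclamp] using key
  · simp only [hclamp]
    have := hprob (Q k) (hQ k)
    exact (hQr k).le.trans (integral_mono (integrable_rampProd hmeas k)
      (integrable_rampProd hmeas j) fun ω => antitone_rampProd _ hjk)

theorem one_sub_tsum_le_VP_iInter (hprob : ∀ P ∈ Ps, IsProbabilityMeasure P)
    (hrep : S.IsRepresentedBy Ps) (hcpt : S.CountableDimWeaklyCompact Ps)
    (hH : ∀ i, X i ∈ S.H) (hmeas : ∀ i, Measurable (X i)) (hindep : S.Indep X)
    (hsum : Summable fun n => 1 - VP Ps {ω | 1 ≤ X n ω}) :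
    1 - ∑' n, (1 - VP Ps {ω | 1 ≤ X n ω}) ≤ VP Ps (⋂ n, {ω | 1 ≤ X n ω}) := by
  refine le_of_forall_pos_le_add fun ε hε => ?_
  obtain ⟨P, hP, hPj⟩ := exists_forall_le_integral_rampProd hprob hrep hcpt hH hmeas
    (r := 1 - ∑' n, (1 - VP Ps {ω | 1 ≤ X n ω}) - ε) fun k => by
      linarith [one_sub_tsum_le_E_rampProd hprob hrep hH hmeas hindep hsum k]
  have := hprob P hP
  linarith [ge_of_tendsto' (tendsto_integral_rampProd (μ := P) hmeas) hPj,
    measure_toReal_le_VP hprob hP (⋂ n, {ω | 1 ≤ X n ω})]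

end BorelCantelli

/-- first (direct) Borel–Cantelli type lemma under sub-linear expectation:
if `Σ v(Xₙ < 1) < ∞` then `V^P(⋃ₘ ⋂_{i ≥ m} {X_i ≥ 1}) = 1`. -/
theorem borel_cantelli_full_capacity {Ω : Type*} [MeasurableSpace Ω] (S : SLE Ω)
    (Ps : Set (MeasureTheory.Measure Ω))
    (hprob : ∀ P ∈ Ps, MeasureTheory.IsProbabilityMeasure P)
    (hrep : ∀ X ∈ S.H, (∃ M, ∀ ω, |X ω| ≤ M) →
      S.E X = sSup ((fun P : MeasureTheory.Measure Ω => ∫ ω, X ω ∂P) '' Ps))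
    (hcompact : ∀ Y : ℕ → Ω → ℝ, (∀ i, Y i ∈ S.H ∧ ∃ M, ∀ ω, |Y i ω| ≤ M) →
      ∀ Pseq : ℕ → MeasureTheory.Measure Ω, (∀ k, Pseq k ∈ Ps) →
      ∃ φ : ℕ → ℕ, StrictMono φ ∧ ∃ P ∈ Ps,
        ∀ (d : ℕ) (f : (Fin d → ℝ) → ℝ),
          (∃ K, LipschitzWith K f) → (∃ M, ∀ x, |f x| ≤ M) →
          Tendsto (fun k => ∫ ω, f (fun i : Fin d => Y i ω) ∂(Pseq (φ k))) atTop
            (nhds (∫ ω, f (fun i : Fin d => Y i ω) ∂P)))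
    (X : ℕ → Ω → ℝ) (hH : ∀ n, X n ∈ S.H) (hmeas : ∀ n, Measurable (X n))
    (hindep : S.Indep X)
    (hsum : Summable (fun n => 1 - VP Ps {ω | 1 ≤ X n ω})) :
    VP Ps (⋃ m : ℕ, ⋂ i : ℕ, ⋂ (_ : m ≤ i), {ω | 1 ≤ X i ω}) = 1 := by
  set A := ⋃ m : ℕ, ⋂ i : ℕ, ⋂ (_ : m ≤ i), {ω | 1 ≤ X i ω}
  have hsub : ∀ m, (⋂ n, {ω | 1 ≤ X (n + m) ω}) ⊆ A := fun m ω hω =>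
    mem_iUnion.2 ⟨m, mem_iInter₂.2 fun i hi => by
      simpa [Nat.sub_add_cancel hi] using mem_iInter.1 hω (i - m)⟩
  have htail : ∀ m, 1 - ∑' n, (1 - VP Ps {ω | 1 ≤ X (n + m) ω}) ≤ VP Ps A := fun m =>
    (one_sub_tsum_le_VP_iInter hprob hrep hcompact (fun _ => hH _) (fun _ => hmeas _)
      (hindep.shift m) ((summable_nat_add_iff m).2 hsum)).trans (VP_mono hprob (hsub m))
  have hlim : Tendsto (fun m => 1 - ∑' n, (1 - VP Ps {ω | 1 ≤ X (n + m) ω})) atTop (𝓝 1) := by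
    simpa using (tendsto_sum_nat_add fun n => 1 - VP Ps {ω | 1 ≤ X n ω}).const_sub 1
  exact le_antisymm (VP_le_one hprob _) (le_of_tendsto' hlim htail)
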